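/- Linear-in-time position diameter bound and communication lower bound: let (x, v) be a solution of the ICS system on [0,∞) with sup_i(‖x_i(0)‖ + ‖v_i(0)‖) < ∞. Set a = sup_{i,j}‖x_i(0) − x_j(0)‖ and b = (∑_{k=1}^d D_v^(k)(0)²)^{1/2}. Then for all t ≥ 0: (i) sup_{i,j}‖x_i(t) − x_j(t)‖ ≤ a + b t, and (ii) inf_{i,j} ψ(‖x_j(t) − x_i(t)‖) ≥ ψ(a + b t). -/

import Mathlib

open Filter MeasureTheory
open scoped Topology

noncomputable section

/-- Componentwise sign-power map `Γ`. -/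
def Gam (d : ℕ) (α : ℝ) (v : EuclideanSpace ℝ (Fin d)) : EuclideanSpace ℝ (Fin d) :=
  WithLp.toLp 2 (fun k => Real.sign (v k) * |v k| ^ α)

/-- Right-hand side of the ICS velocity equation. -/
def icsRHS (d : ℕ) (κ α : ℝ) (m : ℕ → ℝ) (ψ : ℝ → ℝ)
    (x v : ℕ → ℝ → EuclideanSpace ℝ (Fin d)) (i : ℕ) (t : ℝ) :
    EuclideanSpace ℝ (Fin d) :=
  κ • ∑' j, (m j * ψ ‖x j t - x i t‖) • Gam d α (v j t - v i t)

/-- Solution of the infinite Cucker–Smale system on the set `s`, satisfying the ODE on `sInt`: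
uniform boundedness on compact subsets, continuity, `ẋᵢ = vᵢ`, and
`v̇ᵢ = κ ∑ⱼ mⱼ ψ(‖xⱼ-xᵢ‖) Γ(vⱼ-vᵢ)` with the series converging absolutely. -/
def IsICSSolOn (d : ℕ) (κ α : ℝ) (m : ℕ → ℝ) (ψ : ℝ → ℝ)
    (x v : ℕ → ℝ → EuclideanSpace ℝ (Fin d)) (s sInt : Set ℝ) : Prop :=
  (∀ K : Set ℝ, K ⊆ s → IsCompact K → ∃ C : ℝ, ∀ i, ∀ t ∈ K, ‖x i t‖ + ‖v i t‖ ≤ C) ∧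
  (∀ i, ContinuousOn (x i) s) ∧
  (∀ i, ContinuousOn (v i) s) ∧
  (∀ i, ∀ t ∈ sInt,
      HasDerivAt (x i) (v i t) t ∧
      Summable (fun j => ‖(m j * ψ ‖x j t - x i t‖) • Gam d α (v j t - v i t)‖) ∧
      HasDerivAt (v i) (icsRHS d κ α m ψ x v i t) t)

/-- Upper right Dini derivative `D⁺f(t) = limsup_{h→0⁺} (f(t+h)-f(t))/h`. -/
def diniUR (f : ℝ → ℝ) (t : ℝ) : ℝ :=
  limsup (fun h => (f (t + h) - f t) / h) (𝓝[>] (0 : ℝ))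

/-- Lower right Dini derivative `D⁻f(t) = liminf_{h→0⁺} (f(t+h)-f(t))/h`. -/
def diniLR (f : ℝ → ℝ) (t : ℝ) : ℝ :=
  liminf (fun h => (f (t + h) - f t) / h) (𝓝[>] (0 : ℝ))

/-- `M^(k)(t) = sup_i v_i^k(t)`. -/
def Msup (d : ℕ) (v : ℕ → ℝ → EuclideanSpace ℝ (Fin d)) (k : Fin d) (t : ℝ) : ℝ :=
  ⨆ i, v i t k

/-- `m^(k)(t) = inf_i v_i^k(t)`. -/
def minf (d : ℕ) (v : ℕ → ℝ → EuclideanSpace ℝ (Fin d)) (k : Fin d) (t : ℝ) : ℝ :=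
  ⨅ i, v i t k

/-- Component velocity diameter `D_v^(k)(t) = M^(k)(t) - m^(k)(t)`. -/
def Dv (d : ℕ) (v : ℕ → ℝ → EuclideanSpace ℝ (Fin d)) (k : Fin d) (t : ℝ) : ℝ :=
  Msup d v k t - minf d v k t

/-- Position diameter `D_x(t) = sup_{i,j} ‖x_i(t) - x_j(t)‖`. -/
def Dx (d : ℕ) (x : ℕ → ℝ → EuclideanSpace ℝ (Fin d)) (t : ℝ) : ℝ :=
  ⨆ p : ℕ × ℕ, ‖x p.1 t - x p.2 t‖

/-- Weighted `ℓ²_m` seminorm. -/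
def wnorm (d : ℕ) (m : ℕ → ℝ) (u : ℕ → EuclideanSpace ℝ (Fin d)) : ℝ :=
  Real.sqrt (∑' i, m i * ‖u i‖ ^ 2)

/-! Each velocity component obeys a maximum principle. The coupling only pulls an agent towards
the others, so `v̇ᵢᵏ ≤ κ (Mᵏ - vᵢᵏ)^α` with `Mᵏ = supⱼ vⱼᵏ`; together with a uniform Lipschitz bound
on the velocities this makes the increments of `Mᵏ` superlinearly small, `Mᵏ(s₂) - Mᵏ(s₁) =
o(s₂ - s₁)`, so `Mᵏ` is non-increasing, and by the symmetry `(x, v) ↦ (-x, -v)` the infimum is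
non-decreasing. All relative velocities therefore stay below `b`, positions separate at most at
rate `b`, and (ii) follows because `ψ` is non-increasing. -/

open Set

theorem sub_le_mul_sub_of_hasDerivAt_le {f f' : ℝ → ℝ} {a b C : ℝ} (hab : a ≤ b)
    (hf : ContinuousOn f (Icc a b)) (hf' : ∀ s ∈ Ioo a b, HasDerivAt f (f' s) s)
    (hC : ∀ s ∈ Ioo a b, f' s ≤ C) : f b - f a ≤ C * (b - a) := by
  rcases hab.eq_or_lt with rfl | hlt
  · simp
  obtain ⟨c, hc, hslope⟩ := exists_hasDerivAt_eq_slope f f' hlt hf hf'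
  rw [eq_div_iff (sub_pos.2 hlt).ne'] at hslope
  rw [← hslope]
  exact mul_le_mul_of_nonneg_right (hC c hc) (sub_pos.2 hlt).le

theorem norm_sub_le_mul_sub_of_norm_hasDerivAt_le {E : Type*} [NormedAddCommGroup E]
    [NormedSpace ℝ E] {f f' : ℝ → E} {a b C : ℝ} (hab : a ≤ b)
    (hf : ContinuousOn f (Icc a b)) (hf' : ∀ s ∈ Ioo a b, HasDerivAt f (f' s) s)
    (hC : ∀ s ∈ Ioo a b, ‖f' s‖ ≤ C) : ‖f b - f a‖ ≤ C * (b - a) := by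
  rcases hab.eq_or_lt with rfl | hlt
  · simp
  have hC0 : 0 ≤ C := (norm_nonneg _).trans (hC _ (exists_between hlt).choose_spec)
  have hlip : LipschitzOnWith C.toNNReal f (Ioo a b) :=
    (convex_Ioo a b).lipschitzOnWith_of_nnnorm_hasDerivWithin_le
      (fun s hs => (hf' s hs).hasDerivWithinAt)
      (fun s hs => by rw [← NNReal.coe_le_coe, coe_nnnorm, Real.coe_toNNReal _ hC0]; exact hC s hs)
  rw [← closure_Ioo hlt.ne] at hf
  have := (hlip.closure hf).norm_sub_le (x := b) (y := a) (by simp [closure_Ioo hlt.ne, hab])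
    (by simp [closure_Ioo hlt.ne, hab])
  rwa [Real.coe_toNNReal _ hC0, Real.norm_of_nonneg (sub_nonneg.2 hab)] at this

theorem le_of_sub_le_mul_of_tendsto_zero {f g : ℝ → ℝ} {a b : ℝ} (hab : a ≤ b)
    (hg : Tendsto g (𝓝[>] 0) (𝓝 0))
    (hf : ∀ x y, a ≤ x → x < y → y ≤ b → f y - f x ≤ (y - x) * g (y - x)) : f b ≤ f a := by
  rcases hab.eq_or_lt with rfl | hlt
  · rfl
  have hsubdiv : ∀ n : ℕ, 0 < n → f b - f a ≤ (b - a) * g ((b - a) / n) := by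
    intro n hn
    set h := (b - a) / n with hh
    have hpos : 0 < h := div_pos (sub_pos.2 hlt) (Nat.cast_pos.2 hn)
    have hnh : n * h = b - a := by rw [hh]; field_simp
    have hsteps : ∀ k ≤ n, f (a + k * h) - f a ≤ k * h * g h := by
      intro k
      induction k with
      | zero => simp
      | succ k ih =>
        intro hk
        have hkn : ((k : ℝ) + 1) ≤ n := by exact_mod_cast hk
        have hstep := hf (a + k * h) (a + (k + 1) * h) (by nlinarith) (by linarith)
          (by nlinarith)
        rw [show a + (k + 1) * h - (a + k * h) = h by ring] at hstep
        push_cast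
        linarith [ih (by omega)]
    have := hsteps n le_rfl
    rwa [hnh, add_sub_cancel] at this
  have hmesh : Tendsto (fun n : ℕ => (b - a) / n) atTop (𝓝[>] 0) :=
    tendsto_nhdsWithin_iff.2 ⟨tendsto_const_div_atTop_nhds_zero_nat _,
      eventually_atTop.2 ⟨1, fun n hn => div_pos (sub_pos.2 hlt) (by exact_mod_cast hn)⟩⟩
  have hlim := (hg.comp hmesh).const_mul (b - a)
  rw [mul_zero] at hlim
  have := ge_of_tendsto hlim (eventually_atTop.2 ⟨1, fun n hn => hsubdiv n hn⟩)
  linarith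

section MaximumPrinciple

variable {w w' : ℕ → ℝ → ℝ} {a b B κ α : ℝ}

theorem iSup_sub_iSup_le_of_hasDerivAt_le_rpow (hκ : 0 ≤ κ) (hα : 0 ≤ α)
    (hcont : ∀ j, ContinuousOn (w j) (Icc a b))
    (hderiv : ∀ j, ∀ s ∈ Ioo a b, HasDerivAt (w j) (w' j s) s)
    (hbdd : ∀ s ∈ Icc a b, BddAbove (range fun j => w j s))
    (hB : ∀ j, ∀ s ∈ Ioo a b, |w' j s| ≤ B)
    (hdrift : ∀ j, ∀ s ∈ Ioo a b, w' j s ≤ κ * ((⨆ l, w l s) - w j s) ^ α)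
    {s₁ s₂ : ℝ} (h₁ : a ≤ s₁) (h₁₂ : s₁ < s₂) (h₂ : s₂ ≤ b) :
    (⨆ l, w l s₂) - ⨆ l, w l s₁ ≤
      (s₂ - s₁) * ((s₂ - s₁) + κ * ((s₂ - s₁) ^ 2 + 2 * B * (s₂ - s₁)) ^ α) := by
  set δ := s₂ - s₁
  have hB₀ : 0 ≤ B := by
    obtain ⟨r, hr₁, hr₂⟩ := exists_between h₁₂
    exact (abs_nonneg _).trans (hB 0 r ⟨h₁.trans_lt hr₁, hr₂.trans_le h₂⟩)
  have hlip : ∀ j, ∀ r ∈ Icc s₁ s₂, |w j s₂ - w j r| ≤ B * δ := fun j r hr => by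
    have := norm_sub_le_mul_sub_of_norm_hasDerivAt_le hr.2
      ((hcont j).mono (Icc_subset_Icc (h₁.trans hr.1) h₂))
      (fun s hs => hderiv j s ⟨by linarith [hr.1, hs.1], by linarith [hs.2]⟩)
      (fun s hs => hB j s ⟨by linarith [hr.1, hs.1], by linarith [hs.2]⟩)
    rw [Real.norm_eq_abs] at this
    exact this.trans (mul_le_mul_of_nonneg_left (by linarith [hr.1]) hB₀)
  -- an agent within `δ²` of the supremum at `s₂` stays within `δ² + 2Bδ` of it on `[s₁, s₂]`
  obtain ⟨j, hj⟩ : ∃ j, (⨆ l, w l s₂) - δ ^ 2 < w j s₂ :=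
    exists_lt_of_lt_ciSup (sub_lt_self _ (pow_pos (sub_pos.2 h₁₂) 2))
  have hgap : ∀ r ∈ Ioo s₁ s₂, (⨆ l, w l r) - w j r ≤ δ ^ 2 + 2 * B * δ := by
    intro r hr
    have hsup : (⨆ l, w l r) ≤ (⨆ l, w l s₂) + B * δ := ciSup_le fun l => by
      linarith [(abs_le.1 (hlip l r (Ioo_subset_Icc_self hr))).1,
        le_ciSup (hbdd s₂ ⟨by linarith, h₂⟩) l]
    linarith [(abs_le.1 (hlip j r (Ioo_subset_Icc_self hr))).2]
  have hincr : w j s₂ - w j s₁ ≤ κ * (δ ^ 2 + 2 * B * δ) ^ α * δ :=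
    sub_le_mul_sub_of_hasDerivAt_le h₁₂.le ((hcont j).mono (Icc_subset_Icc h₁ h₂))
      (fun r hr => hderiv j r ⟨by linarith [hr.1], by linarith [hr.2]⟩) fun r hr =>
      (hdrift j r ⟨by linarith [hr.1], by linarith [hr.2]⟩).trans <|
        mul_le_mul_of_nonneg_left (Real.rpow_le_rpow
          (sub_nonneg.2 (le_ciSup (hbdd r ⟨by linarith [hr.1], by linarith [hr.2]⟩) j))
          (hgap r hr) hα) hκ
  have := le_ciSup (hbdd s₁ ⟨h₁, by linarith⟩) j
  nlinarith

theorem iSup_le_iSup_of_hasDerivAt_le_rpow (hab : a ≤ b) (hκ : 0 ≤ κ) (hα : 0 < α)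
    (hcont : ∀ j, ContinuousOn (w j) (Icc a b))
    (hderiv : ∀ j, ∀ s ∈ Ioo a b, HasDerivAt (w j) (w' j s) s)
    (hbdd : ∀ s ∈ Icc a b, BddAbove (range fun j => w j s))
    (hB : ∀ j, ∀ s ∈ Ioo a b, |w' j s| ≤ B)
    (hdrift : ∀ j, ∀ s ∈ Ioo a b, w' j s ≤ κ * ((⨆ l, w l s) - w j s) ^ α) :
    ⨆ j, w j b ≤ ⨆ j, w j a := by
  refine le_of_sub_le_mul_of_tendsto_zero (f := fun s => ⨆ j, w j s)
    (g := fun h => h + κ * (h ^ 2 + 2 * B * h) ^ α) hab ?_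
    fun s₁ s₂ h₁ h₁₂ h₂ => iSup_sub_iSup_le_of_hasDerivAt_le_rpow hκ hα.le hcont hderiv hbdd hB
      hdrift h₁ h₁₂ h₂
  have hg : Continuous fun h : ℝ => h + κ * (h ^ 2 + 2 * B * h) ^ α := by
    fun_prop (disch := exact hα.le)
  simpa [Real.zero_rpow hα.ne'] using (hg.tendsto 0).mono_left nhdsWithin_le_nhds

end MaximumPrinciple

theorem Real.sign_mul_abs_rpow_le {x p α : ℝ} (hα : 0 ≤ α) (hxp : x ≤ p) (hp : 0 ≤ p) :
    Real.sign x * |x| ^ α ≤ p ^ α := by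
  rcases le_or_gt x 0 with hx | hx
  · have hsign : Real.sign x ≤ 0 := by
      rcases hx.lt_or_eq with hx | rfl
      · simp [Real.sign_of_neg hx]
      · simp [Real.sign_zero]
    exact (mul_nonpos_of_nonpos_of_nonneg hsign (Real.rpow_nonneg (abs_nonneg x) α)).trans
      (Real.rpow_nonneg hp α)
  · rw [Real.sign_of_pos hx, one_mul, abs_of_pos hx]
    exact Real.rpow_le_rpow hx.le hxp hα

theorem tsum_mul_le_of_le {c m f : ℕ → ℝ} {M : ℝ} (hc : ∀ j, 0 ≤ c j) (hcm : ∀ j, c j ≤ m j)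
    (hm : HasSum m 1) (hM : 0 ≤ M) (hf : ∀ j, f j ≤ M) (hsum : Summable fun j => c j * f j) :
    ∑' j, c j * f j ≤ M :=
  calc ∑' j, c j * f j ≤ ∑' j, m j * M :=
        hsum.tsum_le_tsum (fun j => (mul_le_mul_of_nonneg_left (hf j) (hc j)).trans
          (mul_le_mul_of_nonneg_right (hcm j) hM)) (hm.summable.mul_right M)
    _ = M := by rw [tsum_mul_right, hm.tsum_eq, one_mul]

-- No boundedness is needed: if `f` is unbounded below, both sides are the junk value `0`.
theorem Real.iSup_neg {ι : Type*} (f : ι → ℝ) : ⨆ i, -f i = -⨅ i, f i := by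
  rw [iSup, iInf, ← Real.sSup_neg, ← Set.image_neg_eq_neg, ← Set.range_comp]
  rfl

theorem EuclideanSpace.norm_le_sqrt_sum_sq {ι : Type*} [Fintype ι] {u : EuclideanSpace ℝ ι}
    {D : ι → ℝ} (h : ∀ k, |u k| ≤ D k) : ‖u‖ ≤ √(∑ k, D k ^ 2) := by
  rw [EuclideanSpace.norm_eq]
  refine Real.sqrt_le_sqrt (Finset.sum_le_sum fun k _ => ?_)
  rw [Real.norm_eq_abs]
  exact pow_le_pow_left₀ (abs_nonneg _) (h k) 2

section ICS

variable {d : ℕ} {κ α : ℝ} {m : ℕ → ℝ} {ψ : ℝ → ℝ} {x v : ℕ → ℝ → EuclideanSpace ℝ (Fin d)}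

theorem Gam_apply (u : EuclideanSpace ℝ (Fin d)) (k : Fin d) :
    Gam d α u k = Real.sign (u k) * |u k| ^ α := rfl

theorem Gam_neg (u : EuclideanSpace ℝ (Fin d)) : Gam d α (-u) = -Gam d α u := by
  ext k
  simp only [Gam_apply, PiLp.neg_apply, Real.sign_neg, abs_neg, neg_mul]

theorem icsRHS_summand_neg (i j : ℕ) (t : ℝ) :
    (m j * ψ ‖-x j t - -x i t‖) • Gam d α (-v j t - -v i t) =
      -((m j * ψ ‖x j t - x i t‖) • Gam d α (v j t - v i t)) := by
  rw [neg_sub_neg, neg_sub_neg, norm_sub_rev (x i t), ← neg_sub (v j t), Gam_neg, smul_neg]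

theorem icsRHS_neg (i : ℕ) (t : ℝ) :
    icsRHS d κ α m ψ (fun j s => -x j s) (fun j s => -v j s) i t = -icsRHS d κ α m ψ x v i t := by
  simp only [icsRHS, icsRHS_summand_neg, tsum_neg, smul_neg]

theorem IsICSSolOn.neg {s sInt : Set ℝ} (hsol : IsICSSolOn d κ α m ψ x v s sInt) :
    IsICSSolOn d κ α m ψ (fun j s => -x j s) (fun j s => -v j s) s sInt := by
  obtain ⟨hbdd, hx, hv, hode⟩ := hsol
  refine ⟨fun K hK hKc => ?_, fun i => (hx i).neg, fun i => (hv i).neg, fun i t ht => ?_⟩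
  · obtain ⟨C, hC⟩ := hbdd K hK hKc
    exact ⟨C, fun i t ht => by simpa only [norm_neg] using hC i t ht⟩
  · obtain ⟨hxi, hsum, hvi⟩ := hode i t ht
    refine ⟨hxi.neg, by simpa only [icsRHS_summand_neg, norm_neg] using hsum, ?_⟩
    rw [icsRHS_neg]
    exact hvi.neg

theorem icsRHS_apply {i : ℕ} {t : ℝ}
    (hsum : Summable fun j => ‖(m j * ψ ‖x j t - x i t‖) • Gam d α (v j t - v i t)‖) (k : Fin d) :
    icsRHS d κ α m ψ x v i t k =
      κ * ∑' j, m j * ψ ‖x j t - x i t‖ * Gam d α (v j t - v i t) k := by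
  simp only [icsRHS, PiLp.smul_apply, smul_eq_mul]
  congr 1
  simpa using (EuclideanSpace.proj k).map_tsum hsum.of_norm

theorem icsRHS_apply_le (hκ : 0 ≤ κ) (hα : 0 ≤ α) (hm₀ : ∀ j, 0 ≤ m j) (hm : HasSum m 1)
    (hψ₀ : ∀ r, 0 ≤ r → 0 ≤ ψ r) (hψ₁ : ∀ r, 0 ≤ r → ψ r ≤ 1) {i : ℕ} {t : ℝ}
    (hsum : Summable fun j => ‖(m j * ψ ‖x j t - x i t‖) • Gam d α (v j t - v i t)‖) (k : Fin d)
    {U : ℝ} (hU : 0 ≤ U) (hv : ∀ j, v j t k - v i t k ≤ U) :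
    icsRHS d κ α m ψ x v i t k ≤ κ * U ^ α := by
  rw [icsRHS_apply hsum k]
  refine mul_le_mul_of_nonneg_left (tsum_mul_le_of_le
    (fun j => mul_nonneg (hm₀ j) (hψ₀ _ (norm_nonneg _)))
    (fun j => mul_le_of_le_one_right (hm₀ j) (hψ₁ _ (norm_nonneg _))) hm
    (Real.rpow_nonneg hU α) (fun j => Real.sign_mul_abs_rpow_le hα (hv j) hU) ?_) hκ
  simpa using (EuclideanSpace.proj k).summable hsum.of_norm

theorem abs_icsRHS_apply_le (hκ : 0 ≤ κ) (hα : 0 ≤ α) (hm₀ : ∀ j, 0 ≤ m j) (hm : HasSum m 1)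
    (hψ₀ : ∀ r, 0 ≤ r → 0 ≤ ψ r) (hψ₁ : ∀ r, 0 ≤ r → ψ r ≤ 1) {i : ℕ} {t : ℝ}
    (hsum : Summable fun j => ‖(m j * ψ ‖x j t - x i t‖) • Gam d α (v j t - v i t)‖) (k : Fin d)
    {R : ℝ} (hR : 0 ≤ R) (hv : ∀ j, |v j t k - v i t k| ≤ R) :
    |icsRHS d κ α m ψ x v i t k| ≤ κ * R ^ α := by
  have hneg := icsRHS_apply_le (x := fun j s => -x j s) (v := fun j s => -v j s)
    hκ hα hm₀ hm hψ₀ hψ₁ (by simpa only [icsRHS_summand_neg, norm_neg] using hsum) k hR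
    fun j => by
      simpa only [PiLp.neg_apply, neg_sub_neg] using
        (le_abs_self _).trans ((abs_sub_comm _ _).trans_le (hv j))
  rw [icsRHS_neg, PiLp.neg_apply] at hneg
  exact abs_le.2 ⟨by linarith, icsRHS_apply_le hκ hα hm₀ hm hψ₀ hψ₁ hsum k hR
    fun j => (le_abs_self _).trans (hv j)⟩

theorem IsICSSolOn.apply_le_iSup_apply_zero (hsol : IsICSSolOn d κ α m ψ x v (Ici 0) (Ioi 0))
    (hκ : 0 ≤ κ) (hα : 0 < α) (hm₀ : ∀ j, 0 ≤ m j) (hm : HasSum m 1)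
    (hψ₀ : ∀ r, 0 ≤ r → 0 ≤ ψ r) (hψ₁ : ∀ r, 0 ≤ r → ψ r ≤ 1) (k : Fin d) {t : ℝ} (ht : 0 ≤ t)
    (i : ℕ) : v i t k ≤ ⨆ j, v j 0 k := by
  obtain ⟨C, hC⟩ := hsol.1 (Icc 0 t) (fun s hs => hs.1) isCompact_Icc
  have hvC : ∀ j, ∀ s ∈ Icc 0 t, |v j s k| ≤ C := fun j s hs => by
    have := PiLp.norm_apply_le (v j s) k
    rw [Real.norm_eq_abs] at this
    linarith [hC j s hs, norm_nonneg (x j s)]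
  have hbdd : ∀ s ∈ Icc 0 t, BddAbove (range fun j => v j s k) := fun s hs =>
    ⟨C, forall_mem_range.2 fun j => (le_abs_self _).trans (hvC j s hs)⟩
  refine (le_ciSup (hbdd t ⟨ht, le_rfl⟩) i).trans <|
    iSup_le_iSup_of_hasDerivAt_le_rpow (w := fun j s => v j s k)
      (w' := fun j s => icsRHS d κ α m ψ x v j s k) (B := κ * (2 * C) ^ α) ht hκ hα
      (fun j => (EuclideanSpace.proj k).continuous.comp_continuousOn
        ((hsol.2.2.1 j).mono Icc_subset_Ici_self))
      (fun j s hs => (EuclideanSpace.proj (𝕜 := ℝ) k).hasFDerivAt.comp_hasDerivAt s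
        (hsol.2.2.2 j s hs.1).2.2)
      hbdd (fun j s hs => ?_) (fun j s hs => ?_)
  · have hs' : s ∈ Icc 0 t := Ioo_subset_Icc_self hs
    exact abs_icsRHS_apply_le hκ hα.le hm₀ hm hψ₀ hψ₁ (hsol.2.2.2 j s hs.1).2.1 k
      (by linarith [abs_nonneg (v j s k), hvC j s hs'])
      fun l => (abs_sub _ _).trans (by linarith [hvC l s hs', hvC j s hs'])
  · have hsup := fun l => le_ciSup (hbdd s (Ioo_subset_Icc_self hs)) l
    exact icsRHS_apply_le hκ hα.le hm₀ hm hψ₀ hψ₁ (hsol.2.2.2 j s hs.1).2.1 k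
      (sub_nonneg.2 (hsup j)) fun l => sub_le_sub_right (hsup l) _

theorem IsICSSolOn.iInf_apply_zero_le (hsol : IsICSSolOn d κ α m ψ x v (Ici 0) (Ioi 0))
    (hκ : 0 ≤ κ) (hα : 0 < α) (hm₀ : ∀ j, 0 ≤ m j) (hm : HasSum m 1)
    (hψ₀ : ∀ r, 0 ≤ r → 0 ≤ ψ r) (hψ₁ : ∀ r, 0 ≤ r → ψ r ≤ 1) (k : Fin d) {t : ℝ} (ht : 0 ≤ t)
    (i : ℕ) : ⨅ j, v j 0 k ≤ v i t k := by
  have := hsol.neg.apply_le_iSup_apply_zero hκ hα hm₀ hm hψ₀ hψ₁ k ht i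
  simp only [PiLp.neg_apply, Real.iSup_neg] at this
  linarith

end ICS

theorem stmt7_general (d : ℕ) (κ : ℝ) (hκ : 0 < κ) (α : ℝ) (hα0 : 0 < α)
    (m : ℕ → ℝ) (hm0 : ∀ j, 0 ≤ m j) (hmS : Summable m) (hm1 : ∑' j, m j = 1)
    (ψ : ℝ → ℝ)
    (hψanti : AntitoneOn ψ (Set.Ici 0)) (hψ0 : ψ 0 = 1)
    (hψnn : ∀ r, 0 ≤ r → 0 ≤ ψ r)
    (x v : ℕ → ℝ → EuclideanSpace ℝ (Fin d))
    (hsol : IsICSSolOn d κ α m ψ x v (Set.Ici 0) (Set.Ioi 0))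
    (a b : ℝ)
    (ha : a = ⨆ p : ℕ × ℕ, ‖x p.1 0 - x p.2 0‖)
    (hb : b = Real.sqrt (∑ k : Fin d, Dv d v k 0 ^ 2)) :
    ∀ t : ℝ, 0 ≤ t →
      (∀ i j : ℕ, ‖x i t - x j t‖ ≤ a + b * t) ∧
      (∀ i j : ℕ, ψ (a + b * t) ≤ ψ ‖x j t - x i t‖) := by
  intro t ht
  have hm : HasSum m 1 := hm1 ▸ hmS.hasSum
  have hψ₁ : ∀ r, 0 ≤ r → ψ r ≤ 1 := fun r hr => hψ0 ▸ hψanti self_mem_Ici hr hr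
  have hvel : ∀ s, 0 ≤ s → ∀ i j, ‖v i s - v j s‖ ≤ b := fun s hs i j => by
    rw [hb]
    refine EuclideanSpace.norm_le_sqrt_sum_sq fun k => ?_
    have hmax := fun l => hsol.apply_le_iSup_apply_zero hκ.le hα0 hm0 hm hψnn hψ₁ k hs l
    have hmin := fun l => hsol.iInf_apply_zero_le hκ.le hα0 hm0 hm hψnn hψ₁ k hs l
    rw [PiLp.sub_apply, abs_sub_le_iff, Dv, Msup, minf]
    constructor <;> linarith [hmax i, hmax j, hmin i, hmin j]
  have hinit : ∀ i j, ‖x i 0 - x j 0‖ ≤ a := by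
    obtain ⟨C, hC⟩ := hsol.1 {0} (by simp) isCompact_singleton
    have hC' : ∀ i, ‖x i 0‖ ≤ C := fun i => by linarith [hC i 0 rfl, norm_nonneg (v i 0)]
    refine fun i j => ha ▸ le_ciSup (f := fun p : ℕ × ℕ => ‖x p.1 0 - x p.2 0‖) ⟨2 * C, ?_⟩ (i, j)
    exact forall_mem_range.2 fun p => (norm_sub_le _ _).trans (by linarith [hC' p.1, hC' p.2])
  have hx : ∀ i j, ‖x i t - x j t‖ ≤ a + b * t := fun i j => by
    have hspread := norm_sub_le_mul_sub_of_norm_hasDerivAt_le (f := fun s => x i s - x j s) ht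
      (((hsol.2.1 i).sub (hsol.2.1 j)).mono Icc_subset_Ici_self)
      (fun s hs => (hsol.2.2.2 i s hs.1).1.sub (hsol.2.2.2 j s hs.1).1)
      (fun s hs => hvel s hs.1.le i j)
    linarith [norm_sub_norm_le (x i t - x j t) (x i 0 - x j 0), hinit i j]
  exact ⟨hx, fun i j => hψanti (norm_nonneg _) ((norm_nonneg _).trans (hx j i)) (hx j i)⟩

/-- Linear-in-time position diameter bound
`sup_{i,j}‖x_i(t)−x_j(t)‖ ≤ a + b t` and the communication lower bound
`inf_{i,j} ψ(‖x_j(t)−x_i(t)‖) ≥ ψ(a + b t)`. -/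
theorem stmt7 (d : ℕ) (hd : 1 ≤ d) (κ : ℝ) (hκ : 0 < κ) (α : ℝ) (hα0 : 0 < α) (hα1 : α < 1)
    (m : ℕ → ℝ) (hm0 : ∀ j, 0 ≤ m j) (hmS : Summable m) (hm1 : ∑' j, m j = 1)
    (ψ : ℝ → ℝ) (hψLip : ∃ L : NNReal, LipschitzOnWith L ψ (Set.Ici 0))
    (hψanti : AntitoneOn ψ (Set.Ici 0)) (hψ0 : ψ 0 = 1)
    (hψnn : ∀ r, 0 ≤ r → 0 ≤ ψ r)
    (x v : ℕ → ℝ → EuclideanSpace ℝ (Fin d))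
    (hsol : IsICSSolOn d κ α m ψ x v (Set.Ici 0) (Set.Ioi 0))
    (hinit : ∃ C : ℝ, ∀ i, ‖x i 0‖ + ‖v i 0‖ ≤ C)
    (a b : ℝ)
    (ha : a = ⨆ p : ℕ × ℕ, ‖x p.1 0 - x p.2 0‖)
    (hb : b = Real.sqrt (∑ k : Fin d, Dv d v k 0 ^ 2)) :
    ∀ t : ℝ, 0 ≤ t →
      (∀ i j : ℕ, ‖x i t - x j t‖ ≤ a + b * t) ∧
      (∀ i j : ℕ, ψ (a + b * t) ≤ ψ ‖x j t - x i t‖) :=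
  stmt7_general d κ hκ α hα0 m hm0 hmS hm1 ψ hψanti hψ0 hψnn x v hsol a b ha hb
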